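/- arXiv:2511.11559 — 5 statements merged into one kernel-verified Lean document; each statement's English description precedes it below -/
import Mathlib

section
/- With S = w + z, P = (1/2)wz - 1, and φ(x,z) = z²/2 + (1 - xz)/(x² + 1/2), the identity ∂/∂x [ ((2xP - S)/(2x² + 1)) · e^{x(S - x)} ] = -( φ(x,w)·φ(x,z) - P² - 1 ) · e^{x(S-x)} holds for all real x, w, z. -/
/-!
By the product and quotient rules the derivative is `(F' + (S - 2x) F) e^{x(S-x)}` with
`F = (2xP - S)/(2x² + 1)`. Since `2x² + 1 = 2(x² + 1/2)`, both `F' + (S - 2x) F` and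
`φ(x,w) φ(x,z)` have the denominator `(2x² + 1)²`, and the identity reduces to a polynomial one.
-/

open Real

lemma hasDerivAt_exp_mul_sub_self (S x : ℝ) :
    HasDerivAt (fun x => exp (x * (S - x))) ((S - 2 * x) * exp (x * (S - x))) x := by
  have h : HasDerivAt (fun x => x * (S - x)) (S - 2 * x) x :=
    ((hasDerivAt_id' x).mul ((hasDerivAt_id' x).const_sub S)).congr_deriv (by ring)
  exact h.exp.congr_deriv (mul_comm _ _)

lemma hasDerivAt_div_two_sq_add_one (p s x : ℝ) :
    HasDerivAt (fun x => (2 * x * p - s) / (2 * x ^ 2 + 1))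
      ((2 * p * (2 * x ^ 2 + 1) - (2 * x * p - s) * (4 * x)) / (2 * x ^ 2 + 1) ^ 2) x := by
  have hden : HasDerivAt (fun x => 2 * x ^ 2 + 1) (4 * x) x :=
    (((hasDerivAt_pow 2 x).const_mul 2).add_const 1).congr_deriv (by norm_num; ring)
  exact ((((hasDerivAt_id' x).const_mul 2).mul_const p).sub_const s |>.div hden
    (by positivity)).congr_deriv (by ring)

lemma phi_mul_phi_sub_eq (x w z : ℝ) :
    (w ^ 2 / 2 + (1 - x * w) / (x ^ 2 + 1 / 2)) * (z ^ 2 / 2 + (1 - x * z) / (x ^ 2 + 1 / 2))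
        - ((1 / 2) * w * z - 1) ^ 2 - 1
      = -((2 * ((1 / 2) * w * z - 1) * (2 * x ^ 2 + 1)
            - (2 * x * ((1 / 2) * w * z - 1) - (w + z)) * (4 * x)) / (2 * x ^ 2 + 1) ^ 2
          + (2 * x * ((1 / 2) * w * z - 1) - (w + z)) / (2 * x ^ 2 + 1) * ((w + z) - 2 * x)) := by
  have : x ^ 2 + 1 / 2 ≠ 0 := by positivity
  have : 2 * x ^ 2 + 1 ≠ 0 := by positivity
  field_simp
  ring

/-- With `S = w + z`, `P = wz/2 - 1`, `φ(x,z) = z²/2 + (1-xz)/(x²+1/2)`, one has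
`∂ₓ [((2xP - S)/(2x²+1)) e^{x(S-x)}] = -(φ(x,w)φ(x,z) - P² - 1) e^{x(S-x)}`. -/
theorem stmt_10 (w z : ℝ) (φ : ℝ → ℝ → ℝ)
    (hφ : ∀ x z : ℝ, φ x z = z ^ 2 / 2 + (1 - x * z) / (x ^ 2 + 1 / 2)) :
    ∀ x : ℝ,
      HasDerivAt
        (fun x : ℝ => ((2 * x * ((1 / 2) * w * z - 1) - (w + z)) / (2 * x ^ 2 + 1)) *
          Real.exp (x * ((w + z) - x)))
        (-(φ x w * φ x z - ((1 / 2) * w * z - 1) ^ 2 - 1) *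
          Real.exp (x * ((w + z) - x))) x := by
  intro x
  rw [hφ, hφ, phi_mul_phi_sub_eq, neg_neg]
  exact ((hasDerivAt_div_two_sq_add_one _ _ x).mul
    (hasDerivAt_exp_mul_sub_self (w + z) x)).congr_deriv (by ring)
end

section
/- For all real w, z: ∫_{-∞}^{∞} φ(x,w)·φ(x,z)·e^{x(w+z) - x²} dx = (P² + 1)·e^{(w+z)²/4}·√π, where P = (1/2)wz - 1 and φ(x,z) = z²/2 + (1 - xz)/(x² + 1/2). -/
open MeasureTheory

/-!
With `g x = x (w + z) - x²`, the integrand differs from `((w z / 2 - 1)² + 1) e^{g}` by the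
derivative of `H x = ((1 - w z / 2) x + (w + z) / 2) / (x² + 1/2) · e^{g x}`. Both `H` and its
derivative are bounded rational functions times a Gaussian, hence integrable, so `∫ H' = 0` and the
integral reduces to the Gaussian integral `∫ e^{g} = √π e^{(w+z)²/4}`.
-/

open Real

lemma exp_mul_sub_sq_eq (s x : ℝ) :
    exp (x * s - x ^ 2) = exp (s ^ 2 / 4) * exp (-1 * (x - s / 2) ^ 2) := by
  rw [← exp_add]
  ring_nf

lemma integrable_exp_mul_sub_sq (s : ℝ) : Integrable fun x : ℝ => exp (x * s - x ^ 2) := by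
  simp_rw [exp_mul_sub_sq_eq s]
  exact ((integrable_exp_neg_mul_sq one_pos).comp_sub_right (s / 2)).const_mul _

lemma integral_exp_mul_sub_sq (s : ℝ) :
    ∫ x : ℝ, exp (x * s - x ^ 2) = exp (s ^ 2 / 4) * √π := by
  simp_rw [exp_mul_sub_sq_eq s]
  rw [integral_const_mul, integral_sub_right_eq_self (fun x : ℝ => exp (-1 * x ^ 2)) (s / 2),
    integral_gaussian, div_one]

lemma integrable_mul_exp_mul_sub_sq {u : ℝ → ℝ} (hu : Continuous u) {M : ℝ}
    (hM : ∀ x, |u x| ≤ M) (s : ℝ) : Integrable fun x : ℝ => u x * exp (x * s - x ^ 2) :=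
  (integrable_exp_mul_sub_sq s).bdd_mul hu.aestronglyMeasurable (.of_forall hM)

lemma sq_add_half_pos (x : ℝ) : 0 < x ^ 2 + 1 / 2 := by positivity

lemma continuous_affine_div_sq_add_half (a b : ℝ) :
    Continuous fun x : ℝ => (a * x + b) / (x ^ 2 + 1 / 2) :=
  (by fun_prop : Continuous fun x : ℝ => a * x + b).div (by fun_prop) fun x =>
    (sq_add_half_pos x).ne'

lemma abs_affine_div_sq_add_half_le (a b x : ℝ) :
    |(a * x + b) / (x ^ 2 + 1 / 2)| ≤ 2 * (|a| + |b|) := by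
  rw [abs_div, abs_of_pos (sq_add_half_pos x), div_le_iff₀ (sq_add_half_pos x)]
  have hx : |x| ≤ x ^ 2 + 1 / 2 := by nlinarith [sq_nonneg (|x| - 1 / 2), sq_abs x]
  calc |a * x + b| ≤ |a| * |x| + |b| := by simpa [abs_mul] using abs_add_le (a * x) b
    _ ≤ 2 * (|a| + |b|) * (x ^ 2 + 1 / 2) := by
      nlinarith [abs_nonneg a, abs_nonneg b, sq_nonneg x, mul_le_mul_of_nonneg_left hx (abs_nonneg a)]

noncomputable def phi (x z : ℝ) : ℝ := z ^ 2 / 2 + (1 - x * z) / (x ^ 2 + 1 / 2)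

lemma continuous_phi (z : ℝ) : Continuous fun x => phi x z :=
  continuous_const.add ((by fun_prop : Continuous fun x : ℝ => 1 - x * z).div (by fun_prop)
    fun x => (sq_add_half_pos x).ne')

lemma abs_phi_le (x z : ℝ) : |phi x z| ≤ z ^ 2 / 2 + 2 * (|z| + 1) := by
  have h := abs_affine_div_sq_add_half_le (-z) 1 x
  rw [abs_neg, abs_one, show -z * x + 1 = 1 - x * z by ring] at h
  calc |phi x z| ≤ |z ^ 2 / 2| + |(1 - x * z) / (x ^ 2 + 1 / 2)| := abs_add_le _ _
    _ ≤ _ := by rw [abs_of_nonneg (by positivity)]; linarith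

lemma integrable_phi_mul_phi_mul_exp (w z : ℝ) :
    Integrable fun x => phi x w * phi x z * exp (x * (w + z) - x ^ 2) :=
  integrable_mul_exp_mul_sub_sq ((continuous_phi w).mul (continuous_phi z))
    (fun x => (abs_mul _ _).trans_le <|
      mul_le_mul (abs_phi_le x w) (abs_phi_le x z) (abs_nonneg _) (by positivity)) (w + z)

lemma hasDerivAt_affine_div_mul_exp (w z x : ℝ) :
    HasDerivAt
      (fun x : ℝ => ((1 - w * z / 2) * x + (w + z) / 2) / (x ^ 2 + 1 / 2) *
        exp (x * (w + z) - x ^ 2))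
      (phi x w * phi x z * exp (x * (w + z) - x ^ 2) -
        (((1 / 2) * w * z - 1) ^ 2 + 1) * exp (x * (w + z) - x ^ 2)) x := by
  have hnum : HasDerivAt (fun x : ℝ => (1 - w * z / 2) * x + (w + z) / 2) (1 - w * z / 2) x := by
    simpa using ((hasDerivAt_id x).const_mul (1 - w * z / 2)).add_const ((w + z) / 2)
  have hden : HasDerivAt (fun x : ℝ => x ^ 2 + 1 / 2) (2 * x) x := by
    simpa using (hasDerivAt_pow 2 x).add_const (1 / 2 : ℝ)
  have hexp : HasDerivAt (fun x : ℝ => exp (x * (w + z) - x ^ 2))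
      (exp (x * (w + z) - x ^ 2) * ((w + z) - 2 * x)) x := by
    refine HasDerivAt.exp ?_
    simpa [Pi.sub_def] using ((hasDerivAt_id x).mul_const (w + z)).sub (hasDerivAt_pow 2 x)
  refine ((hnum.div hden (sq_add_half_pos x).ne').mul hexp).congr_deriv ?_
  have := (sq_add_half_pos x).ne'
  rw [Pi.div_apply, phi, phi]
  field_simp
  ring

/-- `∫ φ(x,w) φ(x,z) e^{x(w+z) - x²} dx = (P² + 1) e^{(w+z)²/4} √π`
with `P = wz/2 - 1` and `φ(x,z) = z²/2 + (1-xz)/(x²+1/2)`. -/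
theorem stmt_11 (w z : ℝ) (φ : ℝ → ℝ → ℝ)
    (hφ : ∀ x z : ℝ, φ x z = z ^ 2 / 2 + (1 - x * z) / (x ^ 2 + 1 / 2)) :
    ∫ x : ℝ, φ x w * φ x z * Real.exp (x * (w + z) - x ^ 2) =
      (((1 / 2) * w * z - 1) ^ 2 + 1) * Real.exp ((w + z) ^ 2 / 4) *
        Real.sqrt Real.pi := by
  obtain rfl : φ = phi := funext₂ hφ
  have hf := integrable_phi_mul_phi_mul_exp w z
  have hg := (integrable_exp_mul_sub_sq (w + z)).const_mul (((1 / 2) * w * z - 1) ^ 2 + 1)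
  have hH := integrable_mul_exp_mul_sub_sq (continuous_affine_div_sq_add_half _ _)
    (abs_affine_div_sq_add_half_le (1 - w * z / 2) ((w + z) / 2)) (w + z)
  have hzero := integral_eq_zero_of_hasDerivAt_of_integrable
    (hasDerivAt_affine_div_mul_exp w z) (hf.sub hg) hH
  rw [integral_sub hf hg, integral_const_mul, integral_exp_mul_sub_sq, sub_eq_zero] at hzero
  exact hzero.trans (mul_assoc _ _ _).symm
end

section
/- Define the inner product ⟨p, q⟩ = ∫_{-∞}^{∞} p(x)q(x)·e^{-x²}/(x² + 1/2)² dx on real polynomials, and let a_n(x) be the coefficient of z^n in the expansion of ψ(x,z) = (2x²z² - 4xz + z² + 4)e^{xz - z²/4}. Then ⟨a_m, a_n⟩ = (16(n-1)(n-2)/(2^n · n!))·√π · δ_{mn}; in particular the nonzero a_n (those with n ∉ {1,2}) form an orthogonal family. -/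
open MeasureTheory

namespace Stmt13

open Polynomial Filter Topology Set


noncomputable def HP : ℕ → Polynomial ℝ
  | 0 => 1
  | n+1 => X * HP n - C (1/2 : ℝ) * derivative (HP n)

noncomputable def h (n : ℕ) (x : ℝ) : ℝ := (HP n).eval x
noncomputable def hd (n : ℕ) (x : ℝ) : ℝ := (derivative (HP n)).eval x
noncomputable def hdd (n : ℕ) (x : ℝ) : ℝ := (derivative (derivative (HP n))).eval x

lemma h_zero (x : ℝ) : h 0 x = 1 := by simp [h, HP]

lemma h_succ (n : ℕ) (x : ℝ) : h (n+1) x = x * h n x - (1/2) * hd n x := by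
  simp [h, hd, HP]

lemma HP_deriv : ∀ n : ℕ, derivative (HP (n+1)) = C ((n : ℝ)+1) * HP n := by
  intro n
  induction n with
  | zero => simp [HP]
  | succ m ih =>
    have hdef' : C (1/2 : ℝ) * derivative (HP m) = X * HP m - HP (m+1) := by
      have : HP (m+1) = X * HP m - C (1/2 : ℝ) * derivative (HP m) := rfl
      rw [this]; ring
    rw [show HP (m+2) = X * HP (m+1) - C (1/2 : ℝ) * derivative (HP (m+1)) from rfl]
    simp only [derivative_sub, derivative_mul, derivative_X, derivative_C, derivative_add,
      derivative_one, ih]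
    push_cast
    simp only [C_add, C_1]
    linear_combination (-(C (m:ℝ)) - 1) * hdef'

lemma hd_zero (x : ℝ) : hd 0 x = 0 := by simp [hd, HP]

lemma hd_succ (n : ℕ) (x : ℝ) : hd (n+1) x = ((n:ℝ)+1) * h n x := by
  simp [hd, h, HP_deriv]

lemma hdd_succ (n : ℕ) (x : ℝ) : hdd (n+1) x = ((n:ℝ)+1) * hd n x := by
  simp [hdd, hd, HP_deriv]

lemma hdd_zero (x : ℝ) : hdd 0 x = 0 := by simp [hdd, HP]

lemma h_rec (n : ℕ) (x : ℝ) : h (n+2) x = x * h (n+1) x - (((n:ℝ)+1)/2) * h n x := by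
  rw [h_succ, hd_succ]; ring

lemma h_one (x : ℝ) : h 1 x = x := by
  rw [h_succ, h_zero, hd_zero]; ring

lemma h_two (x : ℝ) : h 2 x = x^2 - 1/2 := by
  have r := h_rec 0 x; norm_num at r; rw [r, h_one, h_zero]; ring

lemma h_three (x : ℝ) : h 3 x = x^3 - (3/2)*x := by
  have r := h_rec 1 x; norm_num at r; rw [r, h_two, h_one]; ring

lemma h_four (x : ℝ) : h 4 x = x^4 - 3*x^2 + 3/4 := by
  have r := h_rec 2 x; norm_num at r; rw [r, h_three, h_two]; ring

lemma h_hasDerivAt (n : ℕ) (x : ℝ) : HasDerivAt (fun y => h n y) (hd n x) x :=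
  Polynomial.hasDerivAt _ x

lemma hd_hasDerivAt (n : ℕ) (x : ℝ) : HasDerivAt (fun y => hd n y) (hdd n x) x :=
  Polynomial.hasDerivAt _ x

/-- `Tf k = η h_k' - 2xη h_k - 2x h_k`, where `η = x²+1/2`. -/
noncomputable def Tf (k : ℕ) (x : ℝ) : ℝ :=
  (x^2+1/2) * hd k x - 2*x*(x^2+1/2) * h k x - 2*x * h k x

/-- derivative of `Tf k` -/
noncomputable def Tfd (k : ℕ) (x : ℝ) : ℝ :=
  (x^2+1/2) * hdd k x - 2*x*(x^2+1/2) * hd k x - (2*(x^2+1/2) + 4*x^2 + 2) * h k x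

lemma Tf_hasDerivAt (k : ℕ) (x : ℝ) : HasDerivAt (fun y => Tf k y) (Tfd k x) x := by
  have h1 : HasDerivAt (fun y : ℝ => (y^2+1/2) * hd k y - 2*y*(y^2+1/2) * h k y - 2*y * h k y)
      (((2*x) * hd k x + (x^2+1/2) * hdd k x)
        - ((2*(x^2+1/2) + 2*x*(2*x)) * h k x + 2*x*(x^2+1/2) * hd k x)
        - (2 * h k x + 2*x * hd k x)) x := by
    have e1 : HasDerivAt (fun y : ℝ => y^2+1/2) (2*x) x := by
      simpa using (hasDerivAt_pow 2 x).add_const (1/2)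
    have e2 : HasDerivAt (fun y : ℝ => 2*y*(y^2+1/2)) (2*(x^2+1/2) + 2*x*(2*x)) x := by
      exact (((hasDerivAt_id x).const_mul 2).mul e1).congr_deriv (by simp only [id]; ring)
    have e3 : HasDerivAt (fun y : ℝ => 2*y) (2:ℝ) x := by
      simpa using (hasDerivAt_id x).const_mul 2
    exact ((e1.mul (hd_hasDerivAt k x)).sub (e2.mul (h_hasDerivAt k x))).sub
      (e3.mul (h_hasDerivAt k x))
  have e : Tfd k x = ((2*x) * hd k x + (x^2+1/2) * hdd k x)
        - ((2*(x^2+1/2) + 2*x*(2*x)) * h k x + 2*x*(x^2+1/2) * hd k x)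
        - (2 * h k x + 2*x * hd k x) := by rw [Tfd]; ring
  simp only [Tf, e]
  exact h1

/-- `G k = η h_{k+1} + x h_k = -½ Tf k`; `a_{k+3} = 2(k+1)(k+2)/(k+3)! · G k`. -/
noncomputable def G (k : ℕ) (x : ℝ) : ℝ := (x^2+1/2) * h (k+1) x + x * h k x

lemma G_eq_Tf (k : ℕ) (x : ℝ) : G k x = -(1/2) * Tf k x := by
  rw [G, Tf, h_succ]; ring

/-- the polynomial `Aₙ(x) = n! aₙ(x)`. -/
noncomputable def Af (n : ℕ) (x : ℝ) : ℝ :=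
  (8*x^4+6) * h n x - 16*x^3 * h (n+1) x + (8*x^2+4) * h (n+2) x

lemma Af_zero (x : ℝ) : Af 0 x = 4 := by
  rw [Af]; norm_num; rw [h_zero, h_one, h_two]; ring

lemma Af_one (x : ℝ) : Af 1 x = 0 := by
  rw [Af]; norm_num; rw [h_one, h_two, h_three]; ring

lemma Af_two (x : ℝ) : Af 2 x = 0 := by
  rw [Af]; norm_num; rw [h_two, h_three, h_four]; ring

lemma Af_eq_G (k : ℕ) (x : ℝ) :
    Af (k+3) x = 2*((k:ℝ)+1)*((k:ℝ)+2) * G k x := by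
  have r2 : h (k+2) x = x * h (k+1) x - (((k:ℝ)+1)/2) * h k x := h_rec k x
  have r3 : h (k+3) x = x * h (k+2) x - (((k:ℝ)+2)/2) * h (k+1) x := by
    have := h_rec (k+1) x
    rw [show k+1+2 = k+3 from by omega, show k+1+1 = k+2 from by omega] at this
    push_cast at this ⊢; linarith [this]
  have r4 : h (k+4) x = x * h (k+3) x - (((k:ℝ)+3)/2) * h (k+2) x := by
    have := h_rec (k+2) x
    rw [show k+2+2 = k+4 from by omega, show k+2+1 = k+3 from by omega] at this
    push_cast at this ⊢; linarith [this]
  have r5 : h (k+5) x = x * h (k+4) x - (((k:ℝ)+4)/2) * h (k+3) x := by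
    have := h_rec (k+3) x
    rw [show k+3+2 = k+5 from by omega, show k+3+1 = k+4 from by omega] at this
    push_cast at this ⊢; linarith [this]
  rw [Af, G, show k+3+2 = k+5 from by omega, show k+3+1 = k+4 from by omega,
    r5, r4, r3, r2]
  ring

/-- the eigen-identity `L h_k = (2k+6) h_k` where `Lq = -q'' + 2xq' + 6q`. -/
lemma L_eigen (k : ℕ) (x : ℝ) :
    -hdd k x + 2*x*hd k x + 6 * h k x = (2*(k:ℝ)+6) * h k x := by
  match k with
  | 0 => rw [hdd_zero, hd_zero]; push_cast; ring
  | 1 =>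
    have d1 : hd 1 x = 1 * h 0 x := by have := hd_succ 0 x; norm_num at this ⊢; exact this
    have dd1 : hdd 1 x = 1 * hd 0 x := by have := hdd_succ 0 x; norm_num at this ⊢; exact this
    rw [d1, dd1, hd_zero, h_zero, h_one]; push_cast; ring
  | (m+2) =>
    have d2 : hd (m+2) x = ((m:ℝ)+2) * h (m+1) x := by
      have := hd_succ (m+1) x
      rw [show m+1+1 = m+2 from by omega] at this
      push_cast at this ⊢; linarith [this]
    have d1 : hd (m+1) x = ((m:ℝ)+1) * h m x := hd_succ m x
    have dd2 : hdd (m+2) x = ((m:ℝ)+2) * hd (m+1) x := by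
      have := hdd_succ (m+1) x
      rw [show m+1+1 = m+2 from by omega] at this
      push_cast at this ⊢; linarith [this]
    rw [dd2, d2, d1, h_rec]
    push_cast; ring

/-- the Riccati/Darboux identity: `T(p·Tq) = (Tp)(Tq) - η² p Lq`, pointwise. -/
lemma star_identity (j k : ℕ) (x : ℝ) :
    (x^2+1/2) * (hd j x * Tf k x + h j x * Tfd k x)
      - 2*x*(x^2+1/2) * (h j x * Tf k x) - 2*x * (h j x * Tf k x)
    = Tf j x * Tf k x - (x^2+1/2)^2 * (h j x * (-hdd k x + 2*x*hd k x + 6*h k x)) := by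
  simp only [Tf, Tfd]; ring


lemma integrable_xpow_gauss (n : ℕ) :
    Integrable (fun x : ℝ => x ^ n * Real.exp (-x^2)) := by
  have hg : Integrable (fun x : ℝ => ((n.factorial : ℝ) * Real.exp (1/2)) *
      Real.exp (-(1/2) * x^2)) :=
    (integrable_exp_neg_mul_sq (by norm_num)).const_mul _
  refine hg.mono' ?_ ?_
  · exact ((continuous_pow n).mul (Real.continuous_exp.comp (continuous_pow 2).neg)
      ).aestronglyMeasurable
  · refine Filter.Eventually.of_forall (fun x => ?_)
    have h1 : |x| ^ n ≤ (n.factorial : ℝ) * Real.exp |x| := by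
      have := Real.pow_div_factorial_le_exp |x| (abs_nonneg x) n
      have hf : (0:ℝ) < n.factorial := by positivity
      calc |x| ^ n = (|x| ^ n / n.factorial) * n.factorial := by field_simp
        _ ≤ Real.exp |x| * n.factorial := by
            apply mul_le_mul_of_nonneg_right this (le_of_lt hf)
        _ = (n.factorial : ℝ) * Real.exp |x| := by ring
    have h2 : Real.exp |x| * Real.exp (-x^2) ≤ Real.exp (1/2) * Real.exp (-(1/2)*x^2) := by
      rw [← Real.exp_add, ← Real.exp_add]
      apply Real.exp_le_exp.mpr
      have : (|x| - 1)^2 ≥ 0 := sq_nonneg _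
      have hx2 : |x|^2 = x^2 := sq_abs x
      nlinarith [sq_abs x]
    calc ‖x ^ n * Real.exp (-x^2)‖ = |x| ^ n * Real.exp (-x^2) := by
          rw [norm_mul, norm_pow]
          simp [abs_of_pos (Real.exp_pos _), Real.norm_eq_abs]
      _ ≤ ((n.factorial : ℝ) * Real.exp |x|) * Real.exp (-x^2) := by
          apply mul_le_mul_of_nonneg_right h1 (le_of_lt (Real.exp_pos _))
      _ = (n.factorial : ℝ) * (Real.exp |x| * Real.exp (-x^2)) := by ring
      _ ≤ (n.factorial : ℝ) * (Real.exp (1/2) * Real.exp (-(1/2)*x^2)) := by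
          apply mul_le_mul_of_nonneg_left h2 (by positivity)
      _ = ((n.factorial : ℝ) * Real.exp (1/2)) * Real.exp (-(1/2) * x^2) := by ring

lemma integrable_poly_gauss (p : Polynomial ℝ) :
    Integrable (fun x : ℝ => p.eval x * Real.exp (-x^2)) := by
  have : (fun x : ℝ => p.eval x * Real.exp (-x^2)) =
      fun x => ∑ i ∈ Finset.range (p.natDegree + 1), (p.coeff i * (x ^ i * Real.exp (-x^2))) := by
    funext x
    rw [Polynomial.eval_eq_sum_range, Finset.sum_mul]
    congr 1; funext i; ring
  rw [this]
  exact integrable_finset_sum _ (fun i _ => (integrable_xpow_gauss i).const_mul _)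

lemma eta_pos (x : ℝ) : (0:ℝ) < x^2 + 1/2 := by positivity

lemma integrable_poly_gauss_eta (p : Polynomial ℝ) :
    Integrable (fun x : ℝ => p.eval x * Real.exp (-x^2) / (x^2 + 1/2)^2) := by
  have hg : Integrable (fun x : ℝ => 4 * |p.eval x * Real.exp (-x^2)|) :=
    ((integrable_poly_gauss p).abs.const_mul 4)
  refine hg.mono' ?_ ?_
  · apply Continuous.aestronglyMeasurable
    exact ((p.continuous_aeval.mul (Real.continuous_exp.comp (continuous_pow 2).neg)).div
      ((continuous_pow 2).comp ((continuous_pow 2).add continuous_const))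
      (fun x => by positivity))
  · refine Filter.Eventually.of_forall (fun x => ?_)
    have h4 : (1:ℝ)/4 ≤ (x^2+1/2)^2 := by nlinarith [sq_nonneg x, sq_nonneg (x^2)]
    have hpos : (0:ℝ) < (x^2+1/2)^2 := by positivity
    rw [norm_div, Real.norm_eq_abs, Real.norm_eq_abs, abs_of_pos hpos, div_le_iff₀ hpos]
    calc |p.eval x * Real.exp (-x^2)| = 4 * |p.eval x * Real.exp (-x^2)| * (1/4) := by ring
      _ ≤ 4 * |p.eval x * Real.exp (-x^2)| * (x^2+1/2)^2 := by
          apply mul_le_mul_of_nonneg_left h4 (by positivity)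

lemma tendsto_poly_gauss_eta_top (p : Polynomial ℝ) :
    Tendsto (fun x : ℝ => p.eval x * Real.exp (-x^2) / (x^2 + 1/2)) atTop (𝓝 0) := by
  have A : Tendsto (fun x : ℝ => p.eval x * Real.exp (-x^2)) atTop (𝓝 0) := by
    have e : (fun x : ℝ => p.eval x * Real.exp (-x^2)) =
        fun x => (p.eval x / Real.exp x) * Real.exp (x - x^2) := by
      funext x
      have e2 : Real.exp (x - x^2) = Real.exp x * Real.exp (-x^2) := by
        rw [← Real.exp_add]; ring_nf
      rw [e2]
      field_simp
    rw [e]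
    have B : Tendsto (fun x : ℝ => x - x^2) atTop atBot := by
      apply tendsto_atBot_mono' atTop (f₁ := fun x : ℝ => 1 - x)
      · exact Filter.Eventually.of_forall
          (fun x => by show x - x^2 ≤ 1 - x; nlinarith [sq_nonneg (x-1)])
      · simpa [sub_eq_add_neg] using tendsto_atBot_add_const_left atTop (1:ℝ) tendsto_neg_atTop_atBot
    have C : Tendsto (fun x : ℝ => Real.exp (x - x^2)) atTop (𝓝 0) :=
      Real.tendsto_exp_atBot.comp B
    simpa using (p.tendsto_div_exp_atTop).mul C
  have D : Tendsto (fun x : ℝ => (x^2 + 1/2)⁻¹) atTop (𝓝 0) := by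
    apply Tendsto.inv_tendsto_atTop
    apply tendsto_atTop_add_const_right
    exact tendsto_pow_atTop (two_ne_zero)
  have := A.mul D
  simpa [div_eq_mul_inv] using this

lemma tendsto_poly_gauss_eta_bot (p : Polynomial ℝ) :
    Tendsto (fun x : ℝ => p.eval x * Real.exp (-x^2) / (x^2 + 1/2)) atBot (𝓝 0) := by
  have A := tendsto_poly_gauss_eta_top (p.comp (-X))
  have B : Tendsto (fun x : ℝ => -x) atBot atTop := tendsto_neg_atBot_atTop
  have C := A.comp B
  refine C.congr (fun x => ?_)
  simp only [Function.comp]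
  rw [Polynomial.eval_comp]
  norm_num

/-- FTC glue: integral over ℝ of a derivative of a function vanishing at ±∞ is zero. -/
lemma integral_deriv_eq_zero (F f : ℝ → ℝ) (hd : ∀ x, HasDerivAt F (f x) x)
    (hi : Integrable f) (ht : Tendsto F atTop (𝓝 0)) (hb : Tendsto F atBot (𝓝 0)) :
    ∫ x : ℝ, f x = 0 := by
  have h1 : ∫ x in Iic (0:ℝ), f x = F 0 - 0 :=
    integral_Iic_of_hasDerivAt_of_tendsto' (fun x _ => hd x) hi.integrableOn hb
  have h2 : ∫ x in Ioi (0:ℝ), f x = 0 - F 0 :=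
    integral_Ioi_of_hasDerivAt_of_tendsto' (fun x _ => hd x) hi.integrableOn ht
  rw [← intervalIntegral.integral_Iic_add_Ioi (b := (0:ℝ)) hi.integrableOn hi.integrableOn, h1, h2]; ring

lemma integrable_polylike_gauss (f : ℝ → ℝ) (P : Polynomial ℝ) (hf : ∀ x, f x = P.eval x) :
    Integrable (fun x : ℝ => f x * Real.exp (-x^2)) := by
  have e : (fun x : ℝ => f x * Real.exp (-x^2)) = fun x => P.eval x * Real.exp (-x^2) :=
    funext (fun x => by rw [hf])
  rw [e]; exact integrable_poly_gauss P

lemma integrable_polylike_gauss_eta (f : ℝ → ℝ) (P : Polynomial ℝ) (hf : ∀ x, f x = P.eval x) :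
    Integrable (fun x : ℝ => f x * Real.exp (-x^2) / (x^2+1/2)^2) := by
  have e : (fun x : ℝ => f x * Real.exp (-x^2) / (x^2+1/2)^2)
      = fun x => P.eval x * Real.exp (-x^2) / (x^2+1/2)^2 := funext (fun x => by rw [hf])
  rw [e]; exact integrable_poly_gauss_eta P

lemma exp_deriv_gauss (x : ℝ) :
    HasDerivAt (fun y : ℝ => Real.exp (-y^2)) (Real.exp (-x^2) * (-(2*x))) x := by
  have inner : HasDerivAt (fun y : ℝ => -y^2) (-(2*x)) x := by
    exact ((hasDerivAt_pow 2 x).neg).congr_deriv (by norm_num)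
  exact inner.exp

/-- Gaussian integration by parts: `∫ (p' - 2xp) e^{-x²} = 0`. -/
lemma intG (p p' : ℝ → ℝ) (hder : ∀ x, HasDerivAt p (p' x) x)
    (P P' : Polynomial ℝ) (hP : ∀ x, p x = P.eval x) (hP' : ∀ x, p' x = P'.eval x) :
    ∫ x : ℝ, (p' x - 2*x*p x) * Real.exp (-x^2) = 0 := by
  apply integral_deriv_eq_zero (fun x => p x * Real.exp (-x^2))
  · intro x
    have hD := (hder x).mul (exp_deriv_gauss x)
    have e : (p' x - 2*x*p x) * Real.exp (-x^2)
        = p' x * Real.exp (-x^2) + p x * (Real.exp (-x^2) * (-(2*x))) := by ring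
    rw [e]; exact hD
  · apply integrable_polylike_gauss _ (P' - C 2 * X * P)
    intro x; simp [hP, hP']; try ring
  · have := tendsto_poly_gauss_eta_top (P * (X^2 + C (1/2)))
    refine this.congr (fun x => ?_)
    have hne : (x:ℝ)^2 + 1/2 ≠ 0 := by positivity
    simp only [eval_mul, eval_add, eval_pow, eval_X, eval_C]
    rw [hP]; field_simp
  · have := tendsto_poly_gauss_eta_bot (P * (X^2 + C (1/2)))
    refine this.congr (fun x => ?_)
    have hne : (x:ℝ)^2 + 1/2 ≠ 0 := by positivity
    simp only [eval_mul, eval_add, eval_pow, eval_X, eval_C]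
    rw [hP]; field_simp

/-- weighted integration by parts: `∫ (η q' - 2xη q - 2x q) e^{-x²}/η² = 0`, `η = x²+1/2`. -/
lemma intT (q q' : ℝ → ℝ) (hder : ∀ x, HasDerivAt q (q' x) x)
    (P P' : Polynomial ℝ) (hP : ∀ x, q x = P.eval x) (hP' : ∀ x, q' x = P'.eval x) :
    ∫ x : ℝ, ((x^2+1/2) * q' x - 2*x*(x^2+1/2) * q x - 2*x * q x)
      * Real.exp (-x^2) / (x^2+1/2)^2 = 0 := by
  apply integral_deriv_eq_zero (fun x => q x * Real.exp (-x^2) / (x^2+1/2))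
  · intro x
    have hnum : HasDerivAt (fun y => q y * Real.exp (-y^2))
        (q' x * Real.exp (-x^2) + q x * (Real.exp (-x^2) * (-(2*x)))) x :=
      (hder x).mul (exp_deriv_gauss x)
    have hden : HasDerivAt (fun y : ℝ => y^2 + 1/2) (2*x) x := by
      simpa using (hasDerivAt_pow 2 x).add_const (1/2)
    have hne : (x:ℝ)^2 + 1/2 ≠ 0 := by positivity
    have hD := hnum.div hden hne
    have hne2 : ((x:ℝ)^2 + 1/2)^2 ≠ 0 := by positivity
    have e : ((x^2+1/2) * q' x - 2*x*(x^2+1/2) * q x - 2*x * q x) * Real.exp (-x^2) / (x^2+1/2)^2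
        = ((q' x * Real.exp (-x^2) + q x * (Real.exp (-x^2) * (-(2*x)))) * (x^2+1/2)
            - q x * Real.exp (-x^2) * (2*x)) / (x^2+1/2)^2 := by
      field_simp
      ring
    rw [e]; exact hD
  · apply integrable_polylike_gauss_eta _
      ((X^2 + C (1/2)) * P' - C 2 * X * (X^2 + C (1/2)) * P - C 2 * X * P)
    intro x; simp [hP, hP']; try ring
  · have := tendsto_poly_gauss_eta_top P
    refine this.congr (fun x => ?_)
    rw [hP]
  · have := tendsto_poly_gauss_eta_bot P
    refine this.congr (fun x => ?_)
    rw [hP]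

lemma gauss_int : ∫ x : ℝ, Real.exp (-x^2) = Real.sqrt Real.pi := by
  simpa using integral_gaussian 1

lemma step (k : ℕ) (p p' : ℝ → ℝ) (hder : ∀ x, HasDerivAt p (p' x) x)
    (P P' : Polynomial ℝ) (hP : ∀ x, p x = P.eval x) (hP' : ∀ x, p' x = P'.eval x) :
    ∫ x : ℝ, p x * h (k+1) x * Real.exp (-x^2)
      = (1/2) * ∫ x : ℝ, p' x * h k x * Real.exp (-x^2) := by
  have hprod : ∀ x, HasDerivAt (fun y => p y * h k y) (p' x * h k x + p x * hd k x) x :=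
    fun x => (hder x).mul (h_hasDerivAt k x)
  have z := intG (fun y => p y * h k y) (fun x => p' x * h k x + p x * hd k x) hprod
      (P * HP k) (P' * HP k + P * derivative (HP k))
      (fun x => by simp [hP, h]) (fun x => by simp [hP, hP', h, hd])
  have iA : Integrable (fun x : ℝ => p x * h (k+1) x * Real.exp (-x^2)) :=
    integrable_polylike_gauss _ (P * HP (k+1)) (fun x => by simp [hP, h])
  have iB : Integrable (fun x : ℝ => (1/2) * (p' x * h k x * Real.exp (-x^2))) := by
    apply Integrable.const_mul
    exact integrable_polylike_gauss _ (P' * HP k) (fun x => by simp [hP', h])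
  have key : ∀ x : ℝ, p x * h (k+1) x * Real.exp (-x^2)
        - (1/2) * (p' x * h k x * Real.exp (-x^2))
      = (-(1/2)) * (((p' x * h k x + p x * hd k x) - 2*x*(p x * h k x)) * Real.exp (-x^2)) := by
    intro x; rw [h_succ]; ring
  have e1 : ∫ x : ℝ, (p x * h (k+1) x * Real.exp (-x^2)
        - (1/2) * (p' x * h k x * Real.exp (-x^2)))
      = -(1/2) * ∫ x : ℝ,
          (((p' x * h k x + p x * hd k x) - 2*x*(p x * h k x)) * Real.exp (-x^2)) := by
    rw [← integral_const_mul]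
    exact integral_congr_ae (Filter.Eventually.of_forall (fun x => key x))
  rw [integral_sub iA iB, integral_const_mul] at e1
  rw [z] at e1
  linarith [e1]

lemma HO : ∀ k j : ℕ, ∫ x : ℝ, h j x * h k x * Real.exp (-x^2)
    = if j = k then (k.factorial : ℝ) * Real.sqrt Real.pi / 2^k else 0 := by
  intro k
  induction k with
  | zero =>
    intro j
    match j with
    | 0 =>
      simp only [h_zero, one_mul, if_pos rfl]
      rw [gauss_int]
      norm_num
    | (i+1) =>
      have s := step i (fun _ => (1:ℝ)) (fun _ => (0:ℝ)) (fun x => hasDerivAt_const x 1)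
        1 0 (fun x => by simp) (fun x => by simp)
      simp only [one_mul, zero_mul, integral_zero, mul_zero] at s
      simp only [h_zero, mul_one]
      rw [s]
      simp
  | succ k ih =>
    intro j
    match j with
    | 0 =>
      have s := step k (fun _ => (1:ℝ)) (fun _ => (0:ℝ)) (fun x => hasDerivAt_const x 1)
        1 0 (fun x => by simp) (fun x => by simp)
      simp only [one_mul, zero_mul, integral_zero, mul_zero] at s
      simp only [h_zero, one_mul]
      rw [s]
      simp
    | (i+1) =>
      have hderiv : ∀ x : ℝ, HasDerivAt (fun y => h (i+1) y) (((i:ℝ)+1) * h i x) x := by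
        intro x
        have := h_hasDerivAt (i+1) x
        rwa [hd_succ] at this
      have s := step k (fun y => h (i+1) y) (fun x => ((i:ℝ)+1) * h i x) hderiv
        (HP (i+1)) (C ((i:ℝ)+1) * HP i) (fun x => rfl) (fun x => by simp [h])
      have pull : ∫ x : ℝ, (((i:ℝ)+1) * h i x) * h k x * Real.exp (-x^2)
          = ((i:ℝ)+1) * ∫ x : ℝ, h i x * h k x * Real.exp (-x^2) := by
        rw [← integral_const_mul]
        congr 1; funext x; ring
      rw [pull, ih i] at s
      by_cases hik : i = k
      · subst hik
        rw [s, if_pos rfl, if_pos rfl]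
        rw [Nat.factorial_succ]
        push_cast
        field_simp
        ring
      · rw [s, if_neg hik, if_neg (by omega : ¬ i+1 = k+1)]
        ring

lemma base_int : ∫ x : ℝ, Real.exp (-x^2) / (x^2+1/2)^2 = 2 * Real.sqrt Real.pi := by
  have z := intT (fun y : ℝ => y) (fun _ => (1:ℝ)) (fun x => hasDerivAt_id x) X 1
      (fun x => by simp) (fun x => by simp)
  have iA : Integrable (fun x : ℝ => Real.exp (-x^2) / (x^2+1/2)^2) := by
    have := integrable_polylike_gauss_eta (fun _ => (1:ℝ)) 1 (fun x => by simp)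
    simpa using this
  have iB : Integrable (fun x : ℝ => 2 * Real.exp (-x^2)) := by
    have := integrable_polylike_gauss (fun _ => (1:ℝ)) 1 (fun x => by simp)
    simpa using (this.const_mul 2)
  have key : ∀ x : ℝ,
      ((x^2+1/2) * 1 - 2*x*(x^2+1/2) * x - 2*x * x) * Real.exp (-x^2) / (x^2+1/2)^2
      = Real.exp (-x^2) / (x^2+1/2)^2 - 2 * Real.exp (-x^2) := by
    intro x
    have hne : (x:ℝ)^2+1/2 ≠ 0 := by positivity
    field_simp
    ring
  have e1 : (0:ℝ) = ∫ x : ℝ, (Real.exp (-x^2)/(x^2+1/2)^2 - 2*Real.exp (-x^2)) := by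
    rw [← z]
    exact integral_congr_ae (Filter.Eventually.of_forall (fun x => key x))
  rw [integral_sub iA iB, integral_const_mul, gauss_int] at e1
  linarith

/-- polynomial witness for `Tf`. -/
noncomputable def TP (k : ℕ) : Polynomial ℝ :=
  (X^2 + C (1/2)) * derivative (HP k) - C 2 * X * (X^2 + C (1/2)) * HP k - C 2 * X * HP k

noncomputable def TPd (k : ℕ) : Polynomial ℝ :=
  (X^2 + C (1/2)) * derivative (derivative (HP k))
    - C 2 * X * (X^2 + C (1/2)) * derivative (HP k)
    - (C 2 * (X^2 + C (1/2)) + C 4 * X^2 + C 2) * HP k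

lemma Tf_eval (k : ℕ) (x : ℝ) : Tf k x = (TP k).eval x := by
  simp [Tf, h, hd, TP]; try ring

lemma Tfd_eval (k : ℕ) (x : ℝ) : Tfd k x = (TPd k).eval x := by
  simp [Tfd, h, hd, hdd, TPd]; try ring

lemma R0 (k : ℕ) : ∫ x : ℝ, Tf k x * Real.exp (-x^2) / (x^2+1/2)^2 = 0 := by
  have z := intT (fun y => h k y) (fun x => hd k x) (h_hasDerivAt k)
      (HP k) (derivative (HP k)) (fun x => rfl) (fun x => rfl)
  have e : ∫ x : ℝ, Tf k x * Real.exp (-x^2) / (x^2+1/2)^2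
      = ∫ x : ℝ, ((x^2+1/2) * hd k x - 2*x*(x^2+1/2) * h k x - 2*x * h k x)
          * Real.exp (-x^2) / (x^2+1/2)^2 :=
    integral_congr_ae (Filter.Eventually.of_forall (fun x => by simp only [Tf]))
  exact e.trans z

lemma R1 (j k : ℕ) :
    ∫ x : ℝ, Tf j x * Tf k x * Real.exp (-x^2) / (x^2+1/2)^2
      = (2*(k:ℝ)+6) * ∫ x : ℝ, h j x * h k x * Real.exp (-x^2) := by
  have hq : ∀ x, HasDerivAt (fun y => h j y * Tf k y) (hd j x * Tf k x + h j x * Tfd k x) x :=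
    fun x => (h_hasDerivAt j x).mul (Tf_hasDerivAt k x)
  have z := intT (fun y => h j y * Tf k y) (fun x => hd j x * Tf k x + h j x * Tfd k x) hq
      (HP j * TP k) (derivative (HP j) * TP k + HP j * TPd k)
      (fun x => by simp [h, Tf_eval]) (fun x => by simp [hd, h, Tf_eval, Tfd_eval])
  have key : ∀ x : ℝ,
      ((x^2+1/2) * (hd j x * Tf k x + h j x * Tfd k x) - 2*x*(x^2+1/2)*(h j x * Tf k x)
        - 2*x*(h j x * Tf k x)) * Real.exp (-x^2) / (x^2+1/2)^2
      = Tf j x * Tf k x * Real.exp (-x^2) / (x^2+1/2)^2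
        - (2*(k:ℝ)+6) * (h j x * h k x * Real.exp (-x^2)) := by
    intro x
    have hne : (x:ℝ)^2+1/2 ≠ 0 := by positivity
    have hnum : (x^2+1/2) * (hd j x * Tf k x + h j x * Tfd k x)
        - 2*x*(x^2+1/2)*(h j x * Tf k x) - 2*x*(h j x * Tf k x)
        = Tf j x * Tf k x - (x^2+1/2)^2 * (h j x * ((2*(k:ℝ)+6) * h k x)) := by
      rw [star_identity j k x, L_eigen k x]
    rw [hnum]
    field_simp
  have iA : Integrable (fun x : ℝ => Tf j x * Tf k x * Real.exp (-x^2)/(x^2+1/2)^2) :=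
    integrable_polylike_gauss_eta _ (TP j * TP k)
      (fun x => by simp [Tf_eval])
  have iB : Integrable (fun x : ℝ => (2*(k:ℝ)+6) * (h j x * h k x * Real.exp (-x^2))) := by
    apply Integrable.const_mul
    exact integrable_polylike_gauss _ (HP j * HP k) (fun x => by simp [h])
  have e1 : (0:ℝ) = ∫ x : ℝ, (Tf j x * Tf k x * Real.exp (-x^2)/(x^2+1/2)^2
      - (2*(k:ℝ)+6) * (h j x * h k x * Real.exp (-x^2))) := by
    rw [← z]
    exact integral_congr_ae (Filter.Eventually.of_forall (fun x => key x))
  rw [integral_sub iA iB, integral_const_mul] at e1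
  linarith

lemma key_inner (j k : ℕ) :
    ∫ x : ℝ, G j x * G k x * Real.exp (-x^2) / (x^2+1/2)^2
      = if j = k then ((k:ℝ)+3) * (k.factorial : ℝ) * Real.sqrt Real.pi / 2^(k+1) else 0 := by
  have e : ∀ x : ℝ, G j x * G k x * Real.exp (-x^2)/(x^2+1/2)^2
      = (1/4) * (Tf j x * Tf k x * Real.exp (-x^2)/(x^2+1/2)^2) := by
    intro x; rw [G_eq_Tf, G_eq_Tf]; ring
  have e2 : ∫ x : ℝ, G j x * G k x * Real.exp (-x^2) / (x^2+1/2)^2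
      = (1/4) * ∫ x : ℝ, Tf j x * Tf k x * Real.exp (-x^2)/(x^2+1/2)^2 := by
    rw [← integral_const_mul]
    exact integral_congr_ae (Filter.Eventually.of_forall e)
  rw [e2, R1, HO k j]
  by_cases hjk : j = k
  · rw [if_pos hjk, if_pos hjk, pow_succ]
    ring
  · rw [if_neg hjk, if_neg hjk]
    ring

lemma key_zero (k : ℕ) :
    ∫ x : ℝ, G k x * Real.exp (-x^2) / (x^2+1/2)^2 = 0 := by
  have e2 : ∫ x : ℝ, G k x * Real.exp (-x^2) / (x^2+1/2)^2
      = (-(1/2)) * ∫ x : ℝ, Tf k x * Real.exp (-x^2)/(x^2+1/2)^2 := by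
    rw [← integral_const_mul]
    refine integral_congr_ae (Filter.Eventually.of_forall (fun x => ?_))
    show G k x * Real.exp (-x^2) / (x^2+1/2)^2
      = -(1/2) * (Tf k x * Real.exp (-x^2) / (x^2+1/2)^2)
    rw [G_eq_Tf]; ring
  rw [e2, R0, mul_zero]

lemma HP1_eval (t : ℝ) : (HP 1).eval t = t := by simp [HP]

lemma HP2_eval (t : ℝ) : (HP 2).eval t = t^2 - 1/2 := by
  have : (HP 2) = X * (X * 1 - C (1/2:ℝ) * derivative 1)
      - C (1/2:ℝ) * derivative (X * 1 - C (1/2:ℝ) * derivative 1) := rfl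
  rw [this]; simp; ring

lemma exp_iteratedDeriv (x : ℝ) : ∀ (k : ℕ) (z : ℝ),
    iteratedDeriv k (fun z : ℝ => Real.exp (x * z - z ^ 2 / 4)) z
      = (HP k).eval (x - z/2) * Real.exp (x * z - z ^ 2 / 4) := by
  intro k
  induction k with
  | zero => intro z; simp [HP]
  | succ m ih =>
    intro z
    rw [iteratedDeriv_succ]
    have efun : iteratedDeriv m (fun z : ℝ => Real.exp (x * z - z ^ 2 / 4))
        = fun z => (HP m).eval (x - z/2) * Real.exp (x * z - z ^ 2 / 4) := funext ih
    rw [efun]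
    have hinner : HasDerivAt (fun z : ℝ => x - z/2) (-(1/2) : ℝ) z := by
      simpa using ((hasDerivAt_id z).div_const 2).const_sub x
    have hpoly : HasDerivAt (fun z : ℝ => (HP m).eval (x - z/2))
        ((derivative (HP m)).eval (x - z/2) * (-(1/2))) z :=
      by have := HasDerivAt.comp z (Polynomial.hasDerivAt (HP m) (x - z/2)) hinner; exact this
    have harg : HasDerivAt (fun z : ℝ => x * z - z ^ 2 / 4) (x - z/2) z := by
      have h1 : HasDerivAt (fun z : ℝ => x * z) x z := by
        simpa using (hasDerivAt_id z).const_mul x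
      have h2 : HasDerivAt (fun z : ℝ => z ^ 2 / 4) (2 * z / 4) z := by
        simpa using (hasDerivAt_pow 2 z).div_const 4
      have h3 := h1.sub h2
      have e : x - z/2 = x - 2 * z / 4 := by ring
      rw [e]; exact h3
    have hexp : HasDerivAt (fun z : ℝ => Real.exp (x * z - z ^ 2 / 4))
        ((x - z/2) * Real.exp (x * z - z ^ 2 / 4)) z := by
      have := harg.exp
      rw [mul_comm] at this
      exact this
    have hprod := hpoly.mul hexp
    have hd' : deriv (fun z => (HP m).eval (x - z/2) * Real.exp (x * z - z ^ 2 / 4)) z = _ :=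
      hprod.deriv
    rw [hd']
    rw [show HP (m+1) = X * HP m - C (1/2:ℝ) * derivative (HP m) from rfl]
    simp only [eval_mul, eval_sub, eval_X, eval_C]
    ring

lemma a_formula (x : ℝ) (n : ℕ) :
    iteratedDeriv n (fun z : ℝ => (2 * x ^ 2 * z ^ 2 - 4 * x * z + z ^ 2 + 4) *
        Real.exp (x * z - z ^ 2 / 4)) 0
      = (8*x^4+6) * h n x - 16*x^3 * h (n+1) x + (8*x^2+4) * h (n+2) x := by
  have cArg : ContDiff ℝ (⊤ : ℕ∞) (fun z : ℝ => x * z - z ^ 2 / 4) :=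
    (contDiff_const.mul contDiff_id).sub ((contDiff_id.pow 2).div_const 4)
  have cE : ContDiff ℝ (⊤ : ℕ∞) (fun z : ℝ => Real.exp (x * z - z ^ 2 / 4)) :=
    Real.contDiff_exp.comp cArg
  have cP : ContDiff ℝ (⊤ : ℕ∞) (fun z : ℝ => x - z/2) :=
    contDiff_const.sub (contDiff_id.div_const 2)
  have cD1 : ContDiff ℝ (⊤ : ℕ∞) (fun z : ℝ => (x - z/2) * Real.exp (x * z - z ^ 2 / 4)) :=
    cP.mul cE
  have cD2 : ContDiff ℝ (⊤ : ℕ∞)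
      (fun z : ℝ => ((x - z/2)^2 - 1/2) * Real.exp (x * z - z ^ 2 / 4)) :=
    ((cP.pow 2).sub contDiff_const).mul cE
  have hD1 : deriv (fun z : ℝ => Real.exp (x * z - z ^ 2 / 4))
      = fun z => (x - z/2) * Real.exp (x * z - z ^ 2 / 4) := by
    funext z
    have h1 := exp_iteratedDeriv x 1 z
    rw [iteratedDeriv_one] at h1
    rw [h1, HP1_eval]
  have hD2 : deriv (fun z : ℝ => (x - z/2) * Real.exp (x * z - z ^ 2 / 4))
      = fun z => ((x - z/2)^2 - 1/2) * Real.exp (x * z - z ^ 2 / 4) := by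
    rw [← hD1]
    funext z
    have h2 := exp_iteratedDeriv x 2 z
    rw [iteratedDeriv_succ, iteratedDeriv_one] at h2
    rw [h2, HP2_eval]
  have hsplit : (fun z : ℝ => (2 * x ^ 2 * z ^ 2 - 4 * x * z + z ^ 2 + 4) *
        Real.exp (x * z - z ^ 2 / 4))
      = (fun z : ℝ => (8*x^4+6) * Real.exp (x * z - z ^ 2 / 4)) +
        ((fun z : ℝ => (-16*x^3) * ((x - z/2) * Real.exp (x * z - z ^ 2 / 4))) +
         (fun z : ℝ => (8*x^2+4) * (((x - z/2)^2 - 1/2) * Real.exp (x * z - z ^ 2 / 4)))) := by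
    funext z
    simp only [Pi.add_apply]
    ring
  have cSum : ContDiff ℝ (n:ℕ∞)
      ((fun z : ℝ => (-16*x^3) * ((x - z/2) * Real.exp (x * z - z ^ 2 / 4))) +
       (fun z : ℝ => (8*x^2+4) * (((x - z/2)^2 - 1/2) * Real.exp (x * z - z ^ 2 / 4)))) :=
    ((contDiff_const.mul cD1).add (contDiff_const.mul cD2)).of_le (mod_cast le_top)
  rw [hsplit]
  rw [← iteratedDerivWithin_univ,
    iteratedDerivWithin_add (Set.mem_univ 0) uniqueDiffOn_univ
      ((contDiff_const.mul cE).of_le (mod_cast le_top)).contDiffWithinAt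
      cSum.contDiffWithinAt,
    iteratedDerivWithin_add (Set.mem_univ 0) uniqueDiffOn_univ
      ((contDiff_const.mul cD1).of_le (mod_cast le_top)).contDiffWithinAt
      ((contDiff_const.mul cD2).of_le (mod_cast le_top)).contDiffWithinAt,
    iteratedDerivWithin_const_mul (Set.mem_univ 0) uniqueDiffOn_univ _
      (cE.of_le (mod_cast le_top)).contDiffWithinAt,
    iteratedDerivWithin_const_mul (Set.mem_univ 0) uniqueDiffOn_univ _
      (cD1.of_le (mod_cast le_top)).contDiffWithinAt,
    iteratedDerivWithin_const_mul (Set.mem_univ 0) uniqueDiffOn_univ _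
      (cD2.of_le (mod_cast le_top)).contDiffWithinAt,
    iteratedDerivWithin_univ, iteratedDerivWithin_univ, iteratedDerivWithin_univ]
  rw [← hD1, ← hD2, ← hD1]
  rw [← iteratedDeriv_succ', ← iteratedDeriv_succ', ← iteratedDeriv_succ']
  rw [exp_iteratedDeriv x n 0, exp_iteratedDeriv x (n+1) 0, exp_iteratedDeriv x (n+2) 0]
  norm_num
  rw [show (HP n).eval x = h n x from rfl, show (HP (n+1)).eval x = h (n+1) x from rfl,
    show (HP (n+2)).eval x = h (n+2) x from rfl]
  ring

end Stmt13

open Stmt13 in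
/-- With `⟨p,q⟩ = ∫ p q e^{-x²}/(x²+1/2)² dx` and `aₙ(x)` the coefficient of `zⁿ` in
`ψ(x,z) = (2x²z² - 4xz + z² + 4) e^{xz - z²/4}`, one has
`⟨aₘ, aₙ⟩ = (16(n-1)(n-2)/(2ⁿ n!)) √π δₘₙ`. -/
theorem stmt_13 (a : ℕ → ℝ → ℝ)
    (ha : ∀ n : ℕ, ∀ x : ℝ, a n x =
      iteratedDeriv n (fun z : ℝ => (2 * x ^ 2 * z ^ 2 - 4 * x * z + z ^ 2 + 4) *
        Real.exp (x * z - z ^ 2 / 4)) 0 / (n.factorial : ℝ)) :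
    ∀ m n : ℕ,
      ∫ x : ℝ, a m x * a n x * Real.exp (-x ^ 2) / (x ^ 2 + 1 / 2) ^ 2 =
        if m = n then
          16 * ((n : ℝ) - 1) * ((n : ℝ) - 2) / (2 ^ n * (n.factorial : ℝ)) *
            Real.sqrt Real.pi
        else 0 := by
  have ha' : ∀ (k : ℕ) (x : ℝ), a k x = Af k x / (k.factorial : ℝ) := by
    intro k x
    rw [ha k x, a_formula,
      show Af k x = (8*x^4+6) * h k x - 16*x^3 * h (k+1) x + (8*x^2+4) * h (k+2) x from rfl]
  have hzero1 : ∀ x : ℝ, a 1 x = 0 := fun x => by rw [ha' 1 x, Af_one]; simp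
  have hzero2 : ∀ x : ℝ, a 2 x = 0 := fun x => by rw [ha' 2 x, Af_two]; simp
  have hA0 : ∀ x : ℝ, a 0 x = 4 := fun x => by
    rw [ha' 0 x, Af_zero]; norm_num
  have hA3 : ∀ (k : ℕ) (x : ℝ),
      a (k+3) x = (2*((k:ℝ)+1)*((k:ℝ)+2) / (((k+3).factorial : ℕ) : ℝ)) * G k x := by
    intro k x
    rw [ha' (k+3) x, Af_eq_G]
    ring
  have hfact3 : ∀ k : ℕ, (((k+3).factorial : ℕ) : ℝ)
      = ((k:ℝ)+3)*((k:ℝ)+2)*((k:ℝ)+1)*(k.factorial : ℝ) := by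
    intro k
    rw [show k+3 = (k+2)+1 from rfl, Nat.factorial_succ,
      show k+2 = (k+1)+1 from rfl, Nat.factorial_succ, Nat.factorial_succ]
    push_cast
    ring
  have hfne : ∀ k : ℕ, ((k.factorial : ℕ) : ℝ) ≠ 0 := fun k => by
    exact_mod_cast Nat.cast_ne_zero.mpr (Nat.factorial_ne_zero k)
  intro m n
  match m, n with
  | 1, n =>
    simp only [hzero1, zero_mul, zero_div, integral_zero]
    by_cases hn : 1 = n
    · rw [if_pos hn, ← hn]; norm_num
    · rw [if_neg hn]
  | 2, n =>
    simp only [hzero2, zero_mul, zero_div, integral_zero]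
    by_cases hn : 2 = n
    · rw [if_pos hn, ← hn]; norm_num
    · rw [if_neg hn]
  | m, 1 =>
    simp only [hzero1, mul_zero, zero_mul, zero_div, integral_zero]
    by_cases hn : m = 1
    · rw [if_pos hn]; norm_num
    · rw [if_neg hn]
  | m, 2 =>
    simp only [hzero2, mul_zero, zero_mul, zero_div, integral_zero]
    by_cases hn : m = 2
    · rw [if_pos hn]; norm_num
    · rw [if_neg hn]
  | 0, 0 =>
    have e1 : ∫ x : ℝ, a 0 x * a 0 x * Real.exp (-x ^ 2) / (x ^ 2 + 1 / 2) ^ 2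
        = 16 * ∫ x : ℝ, Real.exp (-x^2) / (x^2+1/2)^2 := by
      rw [← integral_const_mul]
      refine integral_congr_ae (Filter.Eventually.of_forall (fun x => ?_))
      show a 0 x * a 0 x * Real.exp (-x ^ 2) / (x ^ 2 + 1 / 2) ^ 2
        = 16 * (Real.exp (-x^2) / (x^2+1/2)^2)
      rw [hA0 x]; ring
    rw [e1, base_int, if_pos rfl]
    norm_num
    ring
  | 0, (k+3) =>
    have e1 : ∫ x : ℝ, a 0 x * a (k+3) x * Real.exp (-x ^ 2) / (x ^ 2 + 1 / 2) ^ 2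
        = (4 * (2*((k:ℝ)+1)*((k:ℝ)+2) / (((k+3).factorial : ℕ) : ℝ))) *
            ∫ x : ℝ, G k x * Real.exp (-x^2) / (x^2+1/2)^2 := by
      rw [← integral_const_mul]
      refine integral_congr_ae (Filter.Eventually.of_forall (fun x => ?_))
      show a 0 x * a (k+3) x * Real.exp (-x ^ 2) / (x ^ 2 + 1 / 2) ^ 2
        = (4 * (2*((k:ℝ)+1)*((k:ℝ)+2) / (((k+3).factorial : ℕ) : ℝ))) *
            (G k x * Real.exp (-x^2) / (x^2+1/2)^2)
      rw [hA0 x, hA3 k x]; ring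
    rw [e1, key_zero, mul_zero, if_neg (by omega : ¬ (0:ℕ) = k+3)]
  | (j+3), 0 =>
    have e1 : ∫ x : ℝ, a (j+3) x * a 0 x * Real.exp (-x ^ 2) / (x ^ 2 + 1 / 2) ^ 2
        = (4 * (2*((j:ℝ)+1)*((j:ℝ)+2) / (((j+3).factorial : ℕ) : ℝ))) *
            ∫ x : ℝ, G j x * Real.exp (-x^2) / (x^2+1/2)^2 := by
      rw [← integral_const_mul]
      refine integral_congr_ae (Filter.Eventually.of_forall (fun x => ?_))
      show a (j+3) x * a 0 x * Real.exp (-x ^ 2) / (x ^ 2 + 1 / 2) ^ 2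
        = (4 * (2*((j:ℝ)+1)*((j:ℝ)+2) / (((j+3).factorial : ℕ) : ℝ))) *
            (G j x * Real.exp (-x^2) / (x^2+1/2)^2)
      rw [hA0 x, hA3 j x]; ring
    rw [e1, key_zero, mul_zero, if_neg (by omega : ¬ j+3 = 0)]
  | (j+3), (k+3) =>
    have e1 : ∫ x : ℝ, a (j+3) x * a (k+3) x * Real.exp (-x ^ 2) / (x ^ 2 + 1 / 2) ^ 2
        = ((2*((j:ℝ)+1)*((j:ℝ)+2) / (((j+3).factorial : ℕ) : ℝ)) *
           (2*((k:ℝ)+1)*((k:ℝ)+2) / (((k+3).factorial : ℕ) : ℝ))) *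
            ∫ x : ℝ, G j x * G k x * Real.exp (-x^2) / (x^2+1/2)^2 := by
      rw [← integral_const_mul]
      refine integral_congr_ae (Filter.Eventually.of_forall (fun x => ?_))
      show a (j+3) x * a (k+3) x * Real.exp (-x ^ 2) / (x ^ 2 + 1 / 2) ^ 2
        = ((2*((j:ℝ)+1)*((j:ℝ)+2) / (((j+3).factorial : ℕ) : ℝ)) *
           (2*((k:ℝ)+1)*((k:ℝ)+2) / (((k+3).factorial : ℕ) : ℝ))) *
            (G j x * G k x * Real.exp (-x^2) / (x^2+1/2)^2)
      rw [hA3 j x, hA3 k x]; ring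
    rw [e1, key_inner]
    by_cases hjk : j = k
    · subst hjk
      rw [if_pos rfl, if_pos rfl, hfact3 j]
      have h1 : ((j:ℝ)+1) ≠ 0 := by positivity
      have h2 : ((j:ℝ)+2) ≠ 0 := by positivity
      have h3 : ((j:ℝ)+3) ≠ 0 := by positivity
      have h4 : (2:ℝ)^j ≠ 0 := by positivity
      have h5 := hfne j
      rw [show ((j+3 : ℕ) : ℝ) = (j:ℝ)+3 by push_cast; ring,
        show (2:ℝ)^(j+3) = 2^j * 8 by rw [pow_add]; norm_num,
        show (2:ℝ)^(j+1) = 2^j * 2 by rw [pow_add]; norm_num]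
      field_simp
      ring
    · rw [if_neg hjk, mul_zero, if_neg (by omega : ¬ j+3 = k+3)]
end

section
/- Let ψ(x,z) be the 2×2 matrix-valued function ψ = [[xz - 1, -z²],[0, xz]]·e^{xz}, and let L be the 3rd-order matrix differential operator L = I·∂_z³ + diag(-3/z, -3/z)·∂_z² + [[3/z², 3],[0, 6/z²]]·∂_z + [[0, -6/z],[0, -6/z³]]. Then L(ψ) = x³·ψ for all z ≠ 0. -/
/-! Every entry of `ψ` has the form `(a z² + b z + c) e^{xz}`, and differentiation preserves this
form, acting linearly on the coefficients. Three derivatives of `ψ` are therefore explicit, and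
`L(ψ) = x³ ψ` becomes an identity between rational functions of `z` times `e^{xz}`. -/

/-- Entrywise derivative of a matrix-valued function of a real variable. -/
noncomputable def matDeriv (f : ℝ → Matrix (Fin 2) (Fin 2) ℝ) :
    ℝ → Matrix (Fin 2) (Fin 2) ℝ :=
  fun z => Matrix.of fun i j => deriv (fun t => f t i j) z

noncomputable def quadExpMat (x : ℝ) (A B C : Matrix (Fin 2) (Fin 2) ℝ) :
    ℝ → Matrix (Fin 2) (Fin 2) ℝ :=
  fun t => Real.exp (x * t) • (t ^ 2 • A + t • B + C)

theorem hasDerivAt_exp_mul_quadratic (x a b c t : ℝ) :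
    HasDerivAt (fun s => Real.exp (x * s) * (s ^ 2 * a + s * b + c))
      (Real.exp (x * t) * (t ^ 2 * (x * a) + t * (2 * a + x * b) + (b + x * c))) t := by
  have hexp : HasDerivAt (fun s => Real.exp (x * s)) (Real.exp (x * t) * x) t := by
    simpa using ((hasDerivAt_id t).const_mul x).exp
  have hquad : HasDerivAt (fun s => s ^ 2 * a + s * b + c) (2 * t * a + b) t := by
    simpa using (((hasDerivAt_pow 2 t).mul_const a).add ((hasDerivAt_id t).mul_const b)).add_const c
  exact (hexp.mul hquad).congr_deriv (by ring)

theorem matDeriv_quadExpMat (x : ℝ) (A B C : Matrix (Fin 2) (Fin 2) ℝ) :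
    matDeriv (quadExpMat x A B C) = quadExpMat x (x • A) ((2 : ℝ) • A + x • B) (B + x • C) := by
  funext t
  ext i j
  simp only [matDeriv, quadExpMat, Matrix.of_apply, Matrix.smul_apply, Matrix.add_apply, smul_eq_mul]
  exact (hasDerivAt_exp_mul_quadratic x (A i j) (B i j) (C i j) t).deriv

/-- The matrix generating function `ψ = [[xz-1, -z²],[0, xz]] e^{xz}` satisfies
`L(ψ) = x³ ψ` for `z ≠ 0`, where `L` is the stated 3rd-order matrix differential
operator. -/
theorem stmt_18 (x : ℝ) (ψ : ℝ → Matrix (Fin 2) (Fin 2) ℝ)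
    (hψ : ∀ z : ℝ, ψ z = Real.exp (x * z) • !![x * z - 1, -z ^ 2; 0, x * z]) :
    ∀ z : ℝ, z ≠ 0 →
      (1 : Matrix (Fin 2) (Fin 2) ℝ) * matDeriv (matDeriv (matDeriv ψ)) z +
          !![-3 / z, 0; 0, -3 / z] * matDeriv (matDeriv ψ) z +
          !![3 / z ^ 2, 3; 0, 6 / z ^ 2] * matDeriv ψ z +
          !![0, -6 / z; 0, -6 / z ^ 3] * ψ z
        = x ^ 3 • ψ z := by
  have hψ_eq : ψ = quadExpMat x !![0, -1; 0, 0] !![x, 0; 0, x] !![-1, 0; 0, 0] := by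
    funext t
    rw [hψ, quadExpMat]
    congr 1
    ext i j
    fin_cases i <;> fin_cases j <;> simp <;> ring
  intro z hz
  simp only [hψ_eq, matDeriv_quadExpMat]
  ext i j
  fin_cases i <;> fin_cases j <;> simp [quadExpMat] <;> field_simp <;> ring
end

section
/- Let a_n(x) be the matrix coefficients in the expansion [[xz - 1, -z²],[0, xz]]·e^{xz} = Σ_{n≥0} a_n(x) z^n. Then the recursion diag(n³+3n²-n-3, n(n²+3n+2))·a_{n+3} + [[0, 3(n-1)],[0,0]]·a_{n+1} = x³·a_n holds for every n ≥ 0, where the diagonal matrix and the nilpotent matrix multiply a_{n+3} and a_{n+1} on the left. -/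
/-!
Write the generating function as `e^{xz} (A + z B + z² C)` with constant matrices `A`, `B`, `C`.
Differentiating `e^{xz}` times a quadratic keeps that shape, which gives
`n! aₙ = xⁿ A + n xⁿ⁻¹ B + n (n-1) xⁿ⁻² C`, i.e.
`aₙ = [[(n-1) xⁿ, -n (n-1) xⁿ⁻²], [0, n xⁿ]] / n!`.
With this closed form the recursion is a polynomial identity in `n` and `x`, entry by entry.
-/

open Real Nat

lemma natCast_mul_pow_sub_one_mul {R : Type*} [CommSemiring R] (n : ℕ) (x : R) :
    (n : R) * x ^ (n - 1) * x = n * x ^ n := by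
  rcases n with _ | n
  · simp
  · rw [Nat.add_sub_cancel, pow_succ, mul_assoc]

lemma natCast_mul_sub_one_mul_pow_sub_two_mul_pow_three {R : Type*} [CommRing R] (n : ℕ) (x : R) :
    (n : R) * (n - 1) * x ^ (n - 2) * x ^ 3 = n * (n - 1) * x ^ (n + 1) := by
  rcases n with _ | _ | n
  · simp
  · norm_num
  · rw [show n + 1 + 1 - 2 = n from rfl]
    ring

lemma hasDerivAt_exp_mul_mul_quadratic (x a b c z : ℝ) :
    HasDerivAt (fun z => exp (x * z) * (a + b * z + c * z ^ 2))
      (exp (x * z) * ((x * a + b) + (x * b + 2 * c) * z + x * c * z ^ 2)) z := by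
  have hexp : HasDerivAt (fun z => exp (x * z)) (exp (x * z) * x) z := by
    simpa using ((hasDerivAt_id z).const_mul x).exp
  have hquad : HasDerivAt (fun z => a + b * z + c * z ^ 2) (b + c * (2 * z)) z := by
    simpa using (((hasDerivAt_id z).const_mul b).const_add a).fun_add
      ((hasDerivAt_pow 2 z).const_mul c)
  exact (hexp.fun_mul hquad).congr_deriv (by ring)

lemma iteratedDeriv_exp_mul_mul_quadratic_zero (x a b c : ℝ) (n : ℕ) :
    iteratedDeriv n (fun z => exp (x * z) * (a + b * z + c * z ^ 2)) 0
      = a * x ^ n + n * b * x ^ (n - 1) + n * (n - 1) * c * x ^ (n - 2) := by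
  induction n generalizing a b c with
  | zero => simp
  | succ n ih =>
    rw [iteratedDeriv_succ', funext fun z => (hasDerivAt_exp_mul_mul_quadratic x a b c z).deriv, ih]
    rcases n with _ | _ | n <;> simp only [Nat.add_sub_cancel, pow_succ] <;> push_cast <;> ring

lemma taylorCoeff_exp_smul_quadratic {m p : Type*} (x : ℝ) (A B C : Matrix m p ℝ) (n : ℕ) :
    (Matrix.of fun i j =>
        iteratedDeriv n (fun z => (exp (x * z) • (A + z • B + z ^ 2 • C)) i j) 0 / n !) =
      (n ! : ℝ)⁻¹ • (x ^ n • A + (n * x ^ (n - 1)) • B + (n * (n - 1) * x ^ (n - 2)) • C) := by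
  ext i j
  have hentry : (fun z => (exp (x * z) • (A + z • B + z ^ 2 • C)) i j) =
      fun z => exp (x * z) * (A i j + B i j * z + C i j * z ^ 2) := by
    funext z
    simp only [Matrix.smul_apply, Matrix.add_apply, smul_eq_mul]
    ring
  rw [Matrix.of_apply, hentry]
  simp only [iteratedDeriv_exp_mul_mul_quadratic_zero, Matrix.smul_apply, Matrix.add_apply,
    smul_eq_mul]
  ring

/-- The truncated power `x ^ (n - 2)` is harmless: for `n < 2` it is multiplied by `n (n - 1) = 0`. -/
noncomputable def taylorCoeffClosedForm (x : ℝ) (n : ℕ) : Matrix (Fin 2) (Fin 2) ℝ :=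
  !![((n : ℝ) - 1) * x ^ n / n !, -(n * (n - 1) * x ^ (n - 2)) / n !; 0, n * x ^ n / n !]

lemma taylorCoeff_eq_closedForm (x : ℝ) (n : ℕ) :
    (Matrix.of fun i j => iteratedDeriv n
        (fun z => (exp (x * z) • !![x * z - 1, -z ^ 2; 0, x * z]) i j) 0 / n !) =
      taylorCoeffClosedForm x n := by
  have hsplit : ∀ z : ℝ, !![x * z - 1, -z ^ 2; 0, x * z] =
      !![-1, 0; 0, 0] + z • !![x, 0; 0, x] + z ^ 2 • !![0, -1; 0, 0] := by
    intro z
    ext i j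
    fin_cases i <;> fin_cases j <;>
      simp only [Fin.zero_eta, Fin.mk_one, Matrix.add_apply, Matrix.smul_apply, Matrix.of_apply,
        Matrix.cons_val, smul_eq_mul] <;> ring
  have h := natCast_mul_pow_sub_one_mul n x
  simp only [hsplit, taylorCoeff_exp_smul_quadratic, taylorCoeffClosedForm]
  ext i j
  fin_cases i <;> fin_cases j <;>
    simp only [Fin.zero_eta, Fin.mk_one, Matrix.add_apply, Matrix.smul_apply, Matrix.of_apply,
      Matrix.cons_val, smul_eq_mul]
  · linear_combination (n ! : ℝ)⁻¹ * h
  · ring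
  · ring
  · linear_combination (n ! : ℝ)⁻¹ * h

lemma taylorCoeffClosedForm_recurrence (x : ℝ) (n : ℕ) :
    !![(n : ℝ) ^ 3 + 3 * (n : ℝ) ^ 2 - (n : ℝ) - 3, 0;
        0, (n : ℝ) * ((n : ℝ) ^ 2 + 3 * (n : ℝ) + 2)] * taylorCoeffClosedForm x (n + 3) +
      !![0, 3 * ((n : ℝ) - 1); 0, 0] * taylorCoeffClosedForm x (n + 1)
    = x ^ 3 • taylorCoeffClosedForm x n := by
  have hpow := natCast_mul_sub_one_mul_pow_sub_two_mul_pow_three n x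
  have hfac3 : ((n + 3)! : ℝ) = (n + 3) * (n + 2) * (n + 1) * n ! := by
    push_cast [Nat.factorial_succ]
    ring
  have hfac1 : ((n + 1)! : ℝ) = (n + 1) * n ! := by
    push_cast [Nat.factorial_succ]
    ring
  rw [taylorCoeffClosedForm, taylorCoeffClosedForm, taylorCoeffClosedForm, Matrix.mul_fin_two,
    Matrix.mul_fin_two, hfac3, hfac1, show n + 3 - 2 = n + 1 from rfl]
  ext i j
  fin_cases i <;> fin_cases j <;>
    simp only [Fin.zero_eta, Fin.mk_one, Matrix.add_apply, Matrix.smul_apply, Matrix.of_apply,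
      Matrix.cons_val, smul_eq_mul, Nat.cast_add, Nat.cast_ofNat, Nat.cast_one] <;> field_simp
  · ring
  · linear_combination ((n : ℝ) + 2) * (n + 1) * hpow
  · ring
  · ring

/-- The matrix Taylor coefficients `aₙ` of `[[xz-1, -z²],[0, xz]] e^{xz}` satisfy the
recursion `diag(n³+3n²-n-3, n(n²+3n+2)) a_{n+3} + [[0, 3(n-1)],[0,0]] a_{n+1} = x³ aₙ`. -/
theorem stmt_19 (x : ℝ) (ψ : ℝ → Matrix (Fin 2) (Fin 2) ℝ)
    (hψ : ∀ z : ℝ, ψ z = Real.exp (x * z) • !![x * z - 1, -z ^ 2; 0, x * z])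
    (a : ℕ → Matrix (Fin 2) (Fin 2) ℝ)
    (ha : ∀ n : ℕ, a n = Matrix.of fun i j =>
      iteratedDeriv n (fun z : ℝ => ψ z i j) 0 / (n.factorial : ℝ)) :
    ∀ n : ℕ,
      !![(n : ℝ) ^ 3 + 3 * (n : ℝ) ^ 2 - (n : ℝ) - 3, 0;
          0, (n : ℝ) * ((n : ℝ) ^ 2 + 3 * (n : ℝ) + 2)] * a (n + 3) +
        !![0, 3 * ((n : ℝ) - 1); 0, 0] * a (n + 1)
      = x ^ 3 • a n := by
  obtain rfl : ψ = _ := funext hψ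
  have hclosed : ∀ k, a k = taylorCoeffClosedForm x k :=
    fun k => (ha k).trans (taylorCoeff_eq_closedForm x k)
  intro n
  rw [hclosed, hclosed, hclosed]
  exact taylorCoeffClosedForm_recurrence x n
end
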